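/- Let σ be a sequence of channel actions over Σ and x a word. For every k ∈ ℕ there exist a word w that is a fractional power of rea(σ) and a prefix z of x such that pr[σ^k](x) = w·z. -/

import Mathlib

open List
/-- `wpow u k` is the word `u` concatenated `k` times. -/
def wpow {β : Type*} (u : List β) (k : ℕ) : List β := (List.replicate k u).flatten

/-- Auxiliary residual operation, working on reversed words. -/
def resAux {α : Type*} [DecidableEq α] : List α → List α → List α
  | xr, [] => xr
  | [], _ :: _ => []
  | a :: xr, b :: vr => if a = b then resAux xr vr else resAux (a :: xr) vr
termination_by xr vr => vr.length

/-- The residual `x / v`: the prefix of `x` obtained by removing from `x`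
its longest suffix that is a subword of `v`. -/
def res {α : Type*} [DecidableEq α] (x v : List α) : List α :=
  (resAux x.reverse v.reverse).reverse

inductive Act (α : Type*) where
  | write : List α → Act α
  | read : List α → Act α

/-- written part -/
def wri {α : Type*} : List (Act α) → List α
  | [] => []
  | Act.write w :: σ => w ++ wri σ
  | Act.read _ :: σ => wri σ

/-- read part -/
def rea {α : Type*} : List (Act α) → List α
  | [] => []
  | Act.write _ :: σ => rea σ
  | Act.read w :: σ => w ++ rea σ

/-- `pr σ x` : minimal `σ`-predecessor of `x` (processing `σ` right-to-left). -/
def pr {α : Type*} [DecidableEq α] : List (Act α) → List α → List α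
  | [], x => x
  | Act.write v :: σ, x => res (pr σ x) v
  | Act.read u :: σ, x => u ++ pr σ x

/-- lossy step for a single channel action -/
def stepAct {α : Type*} : Act α → List α → List α → Prop
  | Act.write w, x, y => y <+ x ++ w
  | Act.read w, x, y => w ++ y <+ x

/-- lossy steps along a sequence of channel actions -/
def steps {α : Type*} : List (Act α) → List α → List α → Prop
  | [], x, y => x = y
  | θ :: σ, x, y => ∃ z, stepAct θ x z ∧ steps σ z y

/-- `w` is a fractional power of `u` -/
def FracPow {α : Type*} (u w : List α) : Prop := ∃ k : ℕ, w <+: wpow u k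

/-- `x ⊖ u` : remainder of `x` after reading the leftmost embedding of `u`. -/
def ominus {α : Type*} [DecidableEq α] : List α → List α → List α
  | x, [] => x
  | [], _ :: _ => []
  | a :: x, b :: u => if a = b then ominus x u else ominus x (b :: u)

/-- `σ` is increasing -/
def Increasing {α : Type*} (σ : List (Act α)) : Prop :=
  0 < (wri σ).length ∧
    wpow (rea σ) (wri σ).length <+ wpow (wri σ) ((wri σ).length - 1)

/-!
Residuals only cut words down to prefixes and reads only prepend, so one pass through `σ`
maps a word `y` to a prefix of `rea σ ++ y`. Starting from `x` and iterating, a prefix of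
`rea σ ++ (w ++ z)` with `w` a fractional power of `rea σ` and `z` a prefix of `x` has
the same shape again, with `rea σ ++ w` as the new fractional power.
-/

lemma wpow_succ {β : Type*} (u : List β) (k : ℕ) : wpow u (k + 1) = u ++ wpow u k := by
  simp [wpow, replicate_succ]

lemma prefix_or_exists_eq_append_of_prefix_append {β : Type*} {p a b : List β}
    (h : p <+: a ++ b) : p <+: a ∨ ∃ t, t <+: b ∧ p = a ++ t := by
  rcases le_or_gt p.length a.length with hle | hlt
  · exact Or.inl (prefix_of_prefix_length_le h (prefix_append a b) hle)
  · obtain ⟨t, rfl⟩ := prefix_of_prefix_length_le (prefix_append a b) h hlt.le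
    exact Or.inr ⟨t, (prefix_append_right_inj a).mp h, rfl⟩

namespace FracPow

variable {β : Type*} {u w : List β}

lemma nil : FracPow u [] := ⟨0, nil_prefix⟩

lemma of_prefix {w' : List β} (hw : FracPow u w) (h : w' <+: w) : FracPow u w' :=
  let ⟨k, hk⟩ := hw
  ⟨k, h.trans hk⟩

lemma append_left (hw : FracPow u w) : FracPow u (u ++ w) :=
  let ⟨k, hk⟩ := hw
  ⟨k + 1, by rwa [wpow_succ, prefix_append_right_inj]⟩

lemma exists_eq_append_of_prefix {x z p : List β} (hw : FracPow u w) (hz : z <+: x)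
    (h : p <+: w ++ z) : ∃ w' z', FracPow u w' ∧ z' <+: x ∧ p = w' ++ z' := by
  rcases prefix_or_exists_eq_append_of_prefix_append h with hp | ⟨t, ht, rfl⟩
  · exact ⟨p, [], hw.of_prefix hp, nil_prefix, (append_nil p).symm⟩
  · exact ⟨w, t, hw, ht.trans hz, rfl⟩

end FracPow

section Residual

variable {α : Type*} [DecidableEq α]

lemma resAux_suffix (xr vr : List α) : resAux xr vr <:+ xr := by
  induction xr, vr using resAux.induct with
  | case1 xr => simp [resAux]
  | case2 b vr => simp [resAux]
  | case3 xr b vr ih =>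
    simp only [resAux]
    exact ih.trans (suffix_cons b xr)
  | case4 a xr b vr hne ih => simpa only [resAux, if_neg hne] using ih

lemma res_prefix (x v : List α) : res x v <+: x := by
  simpa [res] using reverse_prefix.mpr (resAux_suffix x.reverse v.reverse)

lemma pr_append (σ₁ σ₂ : List (Act α)) (x : List α) :
    pr (σ₁ ++ σ₂) x = pr σ₁ (pr σ₂ x) := by
  induction σ₁ with
  | nil => simp [pr]
  | cons a σ ih => cases a <;> simp [pr, ih]

lemma pr_prefix_rea_append (σ : List (Act α)) (x : List α) : pr σ x <+: rea σ ++ x := by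
  induction σ with
  | nil => simp [pr, rea]
  | cons a σ ih =>
    cases a with
    | write v => exact (res_prefix _ v).trans (by simpa [pr, rea] using ih)
    | read u => simpa [pr, rea] using ih

end Residual

/-- `pr[σ^k](x)` is a fractional power of `rea(σ)` followed by a
prefix of `x`. -/
theorem pr_iterate_shape {α : Type*} [DecidableEq α]
    (σ : List (Act α)) (x : List α) (k : ℕ) :
    ∃ w z : List α, FracPow (rea σ) w ∧ z <+: x ∧ pr (wpow σ k) x = w ++ z := by
  induction k with
  | zero => exact ⟨[], x, FracPow.nil, prefix_rfl, by simp [wpow, pr]⟩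
  | succ k ih =>
    obtain ⟨w, z, hw, hz, hpr⟩ := ih
    have hpre : pr (wpow σ (k + 1)) x <+: (rea σ ++ w) ++ z := by
      rw [wpow_succ, pr_append, hpr, append_assoc]
      exact pr_prefix_rea_append σ (w ++ z)
    exact hw.append_left.exists_eq_append_of_prefix hz hpre
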